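/- arXiv:1708.05275 — 2 statements merged into one kernel-verified Lean document; each statement's English description precedes it below -/
import Mathlib

section
/- Let E be an exact category with an admissible G-action (each F_g an exact autoequivalence). Then the collection of kernel-cokernel pairs in E^G whose image under the forgetful functor ω is a conflation in E defines the unique maximal exact structure on E^G for which ω is exact. If moreover |G| is invertible in E, then the projective objects of E^G are exactly the equivariant objects whose underlying object is projective in E, i.e., Proj(E^G) = (Proj E)^G, and dually Inj(E^G) = (Inj E)^G. -/
open CategoryTheory Limits
universe v u
variable {G : Type*} [Group G] {A : Type u} [Category.{v} A]

structure GAction (G : Type*) [Group G] (A : Type u) [Category.{v} A] where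
  F : G → A ⥤ A
  equiv : ∀ g, (F g).IsEquivalence
  δ : ∀ g h : G, F h ⋙ F g ≅ F (h * g)
  cocycle : ∀ (g h l : G) (X : A),
    (F g).map ((δ h l).hom.app X) ≫ (δ g (l * h)).hom.app X ≫
      eqToHom (congrArg (fun m => (F m).obj X) (mul_assoc l h g)) =
    (δ g h).hom.app ((F l).obj X) ≫ (δ (h * g) l).hom.app X

structure EqObj (act : GAction G A) where
  obj : A
  lam : ∀ g : G, (act.F g).obj obj ≅ obj
  compat : ∀ g h : G,
    (act.F g).map (lam h).hom ≫ (lam g).hom =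
      (act.δ g h).hom.app obj ≫ (lam (h * g)).hom

namespace EqObj

variable {act : GAction G A}

@[ext]
structure EqHom (X Y : EqObj act) where
  f : X.obj ⟶ Y.obj
  comm : ∀ g : G, (act.F g).map f ≫ (Y.lam g).hom = (X.lam g).hom ≫ f

instance : Category (EqObj act) where
  Hom := EqHom
  id X := ⟨𝟙 X.obj, by intro g; simp⟩
  comp {X Y Z} u v := ⟨u.f ≫ v.f, by
    intro g
    rw [Functor.map_comp, Category.assoc, v.comm, ← Category.assoc, u.comm, Category.assoc]⟩

@[ext]
lemma hom_ext {X Y : EqObj act} {u v : X ⟶ Y} (h : u.f = v.f) : u = v := EqHom.ext h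

@[simp] lemma id_f (X : EqObj act) : (𝟙 X : X ⟶ X).f = 𝟙 X.obj := rfl
@[simp] lemma comp_f {X Y Z : EqObj act} (u : X ⟶ Y) (v : Y ⟶ Z) :
    (u ≫ v).f = u.f ≫ v.f := rfl

@[simps]
def forget (act : GAction G A) : EqObj act ⥤ A where
  obj X := X.obj
  map u := u.f

section Preadditive

variable [Preadditive A] [∀ g : G, (act.F g).Additive]

instance instAddHom (X Y : EqObj act) : Add (X ⟶ Y) :=
  ⟨fun u v => ⟨u.f + v.f, fun g => by
    simp [Preadditive.add_comp, Preadditive.comp_add, u.comm g, v.comm g]⟩⟩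

instance instZeroHom (X Y : EqObj act) : Zero (X ⟶ Y) :=
  ⟨⟨0, fun g => by simp⟩⟩

instance instNegHom (X Y : EqObj act) : Neg (X ⟶ Y) :=
  ⟨fun u => ⟨-u.f, fun g => by
    simp [Preadditive.neg_comp, Preadditive.comp_neg, u.comm g]⟩⟩

instance homAddCommGroup (X Y : EqObj act) : AddCommGroup (X ⟶ Y) where
  add := (· + ·)
  zero := 0
  neg := Neg.neg
  add_assoc := fun a b c => hom_ext (add_assoc a.f b.f c.f)
  zero_add := fun a => hom_ext (zero_add a.f)
  add_zero := fun a => hom_ext (add_zero a.f)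
  nsmul := nsmulRec
  zsmul := zsmulRec
  neg_add_cancel := fun a => hom_ext (neg_add_cancel a.f)
  add_comm := fun a b => hom_ext (add_comm a.f b.f)

instance : Preadditive (EqObj act) where
  homGroup := homAddCommGroup
  add_comp _ _ _ f f' g := hom_ext (Preadditive.add_comp _ _ _ f.f f'.f g.f)
  comp_add _ _ _ f g g' := hom_ext (Preadditive.comp_add _ _ _ f.f g.f g'.f)

@[simp] lemma add_f {X Y : EqObj act} (u v : X ⟶ Y) : (u + v).f = u.f + v.f := rfl
@[simp] lemma zero_f (X Y : EqObj act) : (0 : X ⟶ Y).f = 0 := rfl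

instance : (forget act).Additive where
  map_add := rfl

end Preadditive

end EqObj

/-- A functor is *separable* if the induced transformation on hom-sets admits a natural
retraction. -/
def CategoryTheory.Functor.Separable {C : Type*} [Category C] {B : Type*} [Category B]
    (F : C ⥤ B) : Prop :=
  ∃ Φ : ∀ X Y : C, (F.obj X ⟶ F.obj Y) → (X ⟶ Y),
    (∀ (X Y : C) (f : X ⟶ Y), Φ X Y (F.map f) = f) ∧
    (∀ (X' X Y Y' : C) (u : X' ⟶ X) (v : Y ⟶ Y') (h : F.obj X ⟶ F.obj Y),
      Φ X' Y' (F.map u ≫ h ≫ F.map v) = u ≫ Φ X Y h ≫ v)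

/-- `n` is invertible in an additive category `A` if every morphism is uniquely divisible
by `n`. -/
def NatInvertibleIn (n : ℕ) (A : Type u) [Category.{v} A] [Preadditive A] : Prop :=
  ∀ ⦃X Y : A⦄ (f : X ⟶ Y), ∃! g : X ⟶ Y, n • g = f

/-- A functor `A ⥤ A^G` *is the induction functor* if its composite with the forgetful
functor is naturally isomorphic to `X ↦ ⊕_{g ∈ G} F_g(X)`. -/
def IsInduction [Preadditive A] [HasFiniteBiproducts A] [Fintype G] (act : GAction G A)
    (Ind : A ⥤ EqObj act) : Prop :=
  ∃ iso : ∀ X : A, (EqObj.forget act).obj (Ind.obj X) ≅ ⨁ (fun g : G => (act.F g).obj X),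
    ∀ (X Y : A) (f : X ⟶ Y),
      (EqObj.forget act).map (Ind.map f) ≫ (iso Y).hom =
        (iso X).hom ≫ biproduct.map (fun g => (act.F g).map f)

section ExactCategories

variable (C : Type*) [Category C]

/-- A pair of composable morphisms. -/
structure Conflation where
  X : C
  Y : C
  Z : C
  i : X ⟶ Y
  d : Y ⟶ Z

variable {C}

/-- The image of a composable pair under a functor. -/
def Conflation.map {B : Type*} [Category B] (F : C ⥤ B) (c : Conflation C) :
    Conflation B :=
  ⟨F.obj c.X, F.obj c.Y, F.obj c.Z, F.map c.i, F.map c.d⟩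

variable [Preadditive C]

/-- `c` is a kernel-cokernel pair. -/
def IsKerCokerPair (c : Conflation C) : Prop :=
  ∃ w : c.i ≫ c.d = 0,
    Nonempty (IsLimit (KernelFork.ofι c.i w)) ∧
    Nonempty (IsColimit (CokernelCofork.ofπ c.d w))

/-- Isomorphism of composable pairs. -/
def ConflationIso (c c' : Conflation C) : Prop :=
  ∃ (eX : c.X ≅ c'.X) (eY : c.Y ≅ c'.Y) (eZ : c.Z ≅ c'.Z),
    c.i ≫ eY.hom = eX.hom ≫ c'.i ∧ c.d ≫ eZ.hom = eY.hom ≫ c'.d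

/-- `d` is a deflation for the class `S`. -/
def IsDeflationIn (S : Set (Conflation C)) {Y Z : C} (d : Y ⟶ Z) : Prop :=
  ∃ (X : C) (i : X ⟶ Y), Conflation.mk X Y Z i d ∈ S

/-- `i` is an inflation for the class `S`. -/
def IsInflationIn (S : Set (Conflation C)) {X Y : C} (i : X ⟶ Y) : Prop :=
  ∃ (Z : C) (d : Y ⟶ Z), Conflation.mk X Y Z i d ∈ S

/-- A Quillen exact structure, via Keller's axioms [Ex0], [Ex1], [Ex2], [Ex2ᵒᵖ]. -/
structure ExactStructure (C : Type*) [Category C] [Preadditive C] where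
  conflations : Set (Conflation C)
  kerCoker : ∀ c ∈ conflations, IsKerCokerPair c
  iso_closed : ∀ c ∈ conflations, ∀ c', ConflationIso c c' → c' ∈ conflations
  ex0 : ∀ Z : C, IsZero Z → IsDeflationIn conflations (𝟙 Z)
  ex1 : ∀ {Y Z W : C} (d : Y ⟶ Z) (d' : Z ⟶ W),
    IsDeflationIn conflations d → IsDeflationIn conflations d' →
    IsDeflationIn conflations (d ≫ d')
  ex2 : ∀ {Y Z Z' : C} (d : Y ⟶ Z), IsDeflationIn conflations d → ∀ f : Z' ⟶ Z,
    ∃ (Y' : C) (d' : Y' ⟶ Z') (f' : Y' ⟶ Y),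
      IsDeflationIn conflations d' ∧ IsPullback d' f' f d
  ex2op : ∀ {X Y X' : C} (i : X ⟶ Y), IsInflationIn conflations i → ∀ h : X ⟶ X',
    ∃ (Y' : C) (i' : X' ⟶ Y') (h' : Y ⟶ Y'),
      IsInflationIn conflations i' ∧ IsPushout i h h' i'

/-- `P` is projective relative to the class `S` of conflations. -/
def IsProjectiveIn (S : Set (Conflation C)) (P : C) : Prop :=
  ∀ {Y Z : C} (d : Y ⟶ Z), IsDeflationIn S d → ∀ f : P ⟶ Z, ∃ u : P ⟶ Y, u ≫ d = f

/-- `I` is injective relative to the class `S` of conflations. -/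
def IsInjectiveIn (S : Set (Conflation C)) (I : C) : Prop :=
  ∀ {X Y : C} (i : X ⟶ Y), IsInflationIn S i → ∀ f : X ⟶ I, ∃ u : Y ⟶ I, i ≫ u = f

end ExactCategories

/-!
Everything is computed on underlying objects. Kernels, cokernels, pullbacks and pushouts of
equivariant morphisms inherit equivariant structures, the structure maps being forced by the
universal properties; they are automatically invertible, because a compatible family of
structure maps normalised at `1` consists of isomorphisms. So the kernel-cokernel pairs with
underlying conflation satisfy Keller's axioms, and they contain every exact structure for which
the forgetful functor is exact.

If `|G|` is invertible, averaging `u ↦ |G|⁻¹ ∑_g λ_g⁻¹ ≫ F_g u ≫ λ_g` makes a lift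
(extension) in `A` equivariant, so projectives (injectives) of `A` underlie projectives
(injectives) of `A^G`. Conversely, `Ind Z = ⊕_g F_g Z` receives an equivariant map from `P`
for every `P.obj ⟶ Z`, and `Ind` carries conflations to conflations since a finite direct sum of
deflations is an iterated pullback; lifting through `Ind Y ⟶ Ind Z` in `A^G` and projecting to
the summand at `1` gives a lift in `A`, and dually for injectives. The direct sums exist
because a single conflation already forces binary biproducts.
-/

section FiniteBiproducts

variable {C : Type*} [Category C]

lemma hasProduct_fin_succ [HasBinaryProducts C] :
    ∀ (n : ℕ) (f : Fin (n + 1) → C), HasProduct f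
  | 0, f => HasLimit.mk (limitConeOfUnique (β := Fin 1) f)
  | n + 1, f =>
    haveI := hasProduct_fin_succ n fun i => f i.succ
    HasLimit.mk ⟨_, extendFanIsLimit f (limit.isLimit _) (limit.isLimit _)⟩

instance hasBiproduct_of_nonempty [Preadditive C] [HasBinaryBiproducts C] {J : Type*}
    [Finite J] [Nonempty J] (f : J → C) : HasBiproduct f := by
  obtain ⟨n, ⟨e⟩⟩ := Finite.exists_equiv_fin J
  obtain ⟨n, rfl⟩ : ∃ m, n = m + 1 :=
    Nat.exists_eq_add_one.2 (Fin.pos_iff_nonempty.2 (e.nonempty_congr.1 ‹_›))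
  have := hasProduct_fin_succ n (f ∘ e.symm)
  have := hasProduct_of_equiv_of_iso (f ∘ e.symm) f e fun j => eqToIso (by simp)
  exact HasBiproduct.of_hasProduct f

-- `biproduct.total` is only stated for `J : Type`.
lemma biproduct_total [Preadditive C] {J : Type*} [Fintype J] (f : J → C) [HasBiproduct f] :
    ∑ j, biproduct.π f j ≫ biproduct.ι f j = 𝟙 (⨁ f) :=
  IsBilimit.total (biproduct.isBilimit f)

lemma hom_ext_of_map_ι {D : Type*} [Category D] [Preadditive C] [Preadditive D] (F : C ⥤ D)
    [F.Additive] {J : Type*} [Fintype J] {f : J → C} [HasBiproduct f] {T : D}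
    {a b : F.obj (⨁ f) ⟶ T}
    (h : ∀ j, F.map (biproduct.ι f j) ≫ a = F.map (biproduct.ι f j) ≫ b) : a = b := by
  have expand : ∀ c : F.obj (⨁ f) ⟶ T,
      c = ∑ j, F.map (biproduct.π f j) ≫ F.map (biproduct.ι f j) ≫ c := fun c => by
    simp_rw [← Functor.map_comp_assoc, ← Preadditive.sum_comp, ← F.map_sum, biproduct_total,
      F.map_id, Category.id_comp]
  rw [expand a, expand b]
  simp_rw [h]

noncomputable def isLimitBiproductMap [Preadditive C] {J : Type*} [Fintype J] {X Y Z : J → C}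
    [HasBiproduct X] [HasBiproduct Y] [HasBiproduct Z] {i : ∀ j, X j ⟶ Y j}
    {d : ∀ j, Y j ⟶ Z j} {w : ∀ j, i j ≫ d j = 0}
    (hi : ∀ j, IsLimit (KernelFork.ofι (i j) (w j))) :
    IsLimit (KernelFork.ofι (f := biproduct.map d) (biproduct.map i)
      (biproduct.hom_ext _ _ fun j => by simp [w])) :=
  let lift {T : C} (t : T ⟶ ⨁ Y) (ht : t ≫ biproduct.map d = 0) (j : J) :
      { l // l ≫ i j = t ≫ biproduct.π Y j } :=
    KernelFork.IsLimit.lift' (hi j) (t ≫ biproduct.π Y j) (by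
      simpa using ht =≫ biproduct.π Z j)
  have : ∀ j, Mono (i j) := fun j => mono_of_isLimit_fork (hi j)
  KernelFork.IsLimit.ofι _ _ (fun t ht => biproduct.lift fun j => (lift t ht j).1)
    (fun t ht => biproduct.hom_ext _ _ fun j => by simp [(lift t ht j).2])
    fun t ht m hm => biproduct.hom_ext _ _ fun j => by
      rw [← cancel_mono (i j), biproduct.lift_π, (lift t ht j).2, ← hm]
      simp

end FiniteBiproducts

section JointlyMonoEpi

variable {C D : Type*} [Category C] [Category D] {ι : Type*}

def JointlyMono {K : C} {Y : ι → C} (m : ∀ j, K ⟶ Y j) : Prop :=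
  ∀ ⦃T : C⦄ (a b : T ⟶ K), (∀ j, a ≫ m j = b ≫ m j) → a = b

def JointlyEpi {K : C} {Y : ι → C} (m : ∀ j, Y j ⟶ K) : Prop :=
  ∀ ⦃T : C⦄ (a b : K ⟶ T), (∀ j, m j ≫ a = m j ≫ b) → a = b

lemma JointlyMono.of_mono {K Y : C} (f : K ⟶ Y) [Mono f] : JointlyMono fun _ : Unit => f :=
  fun _ _ _ h => (cancel_mono f).1 (h ())

lemma JointlyEpi.of_epi {K Y : C} (f : Y ⟶ K) [Epi f] : JointlyEpi fun _ : Unit => f :=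
  fun _ _ _ h => (cancel_epi f).1 (h ())

lemma JointlyEpi.map {K : C} {Y : ι → C} {m : ∀ j, Y j ⟶ K} (hm : JointlyEpi m) (F : C ⥤ D)
    [F.IsEquivalence] : JointlyEpi fun j => F.map (m j) := by
  intro T a b hab
  let e := F.objObjPreimageIso T
  suffices F.preimage (a ≫ e.inv) = F.preimage (b ≫ e.inv) by
    simpa using congrArg F.map this
  refine hm _ _ fun j => F.map_injective ?_
  simp [reassoc_of% hab j]

end JointlyMonoEpi

namespace ExactStructure

variable {C : Type*} [Category C] [Preadditive C] (E : ExactStructure C) {c : Conflation C}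

lemma comp_eq_zero (hc : c ∈ E.conflations) : c.i ≫ c.d = 0 :=
  (E.kerCoker c hc).choose

noncomputable def isLimit (hc : c ∈ E.conflations) :
    IsLimit (KernelFork.ofι c.i (E.comp_eq_zero hc)) :=
  (E.kerCoker c hc).choose_spec.1.some

noncomputable def isColimit (hc : c ∈ E.conflations) :
    IsColimit (CokernelCofork.ofπ c.d (E.comp_eq_zero hc)) :=
  (E.kerCoker c hc).choose_spec.2.some

lemma mono_i (hc : c ∈ E.conflations) : Mono c.i :=
  mono_of_isLimit_fork (E.isLimit hc)

lemma epi_d (hc : c ∈ E.conflations) : Epi c.d :=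
  epi_of_isColimit_cofork (E.isColimit hc)

variable {E}

lemma isDeflationIn_iso_hom_comp {V W B : C} {p : W ⟶ B} (hp : IsDeflationIn E.conflations p)
    (e : V ≅ W) : IsDeflationIn E.conflations (e.hom ≫ p) := by
  obtain ⟨X, i, hc⟩ := hp
  exact ⟨X, i ≫ e.inv,
    E.iso_closed _ hc _ ⟨Iso.refl X, e.symm, Iso.refl B, by simp, by simp⟩⟩

lemma mem_of_isLimit {X Y Z : C} {i : X ⟶ Y} {d : Y ⟶ Z} (hd : IsDeflationIn E.conflations d)
    {w : i ≫ d = 0} (hi : IsLimit (KernelFork.ofι i w)) :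
    Conflation.mk X Y Z i d ∈ E.conflations := by
  obtain ⟨X', i', hc⟩ := hd
  let e := (E.isLimit hc).conePointUniqueUpToIso hi
  refine E.iso_closed _ hc _ ⟨e, Iso.refl Y, Iso.refl Z, ?_, by simp⟩
  simpa using ((E.isLimit hc).conePointUniqueUpToIso_hom_comp hi WalkingParallelPair.zero).symm

/-- The biproduct `T ⊞ S` is the pullback along `0 : S ⟶ C` of a deflation `Y' ⟶ C` whose
kernel is `T`; such a deflation is obtained by pushing out any inflation along `0`. -/
lemma hasBinaryBiproducts (hc : c ∈ E.conflations) : HasBinaryBiproducts C := by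
  refine ⟨fun T S => ?_⟩
  obtain ⟨Y', x', -, ⟨C', z', hx⟩, -⟩ := E.ex2op c.i ⟨c.Z, c.d, hc⟩ (0 : c.X ⟶ T)
  obtain ⟨N, π, χ, -, hpb⟩ := E.ex2 z' ⟨T, x', hx⟩ (0 : S ⟶ C')
  have hxz : x' ≫ z' = 0 := E.comp_eq_zero hx
  have := E.mono_i hx
  let κ : T ⟶ N := hpb.lift 0 x' (by simp [hxz])
  let σ : S ⟶ N := hpb.lift (𝟙 S) 0 (by simp)
  have hσπ : σ ≫ π = 𝟙 S := hpb.lift_fst _ _ _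
  obtain ⟨ρ, hρ⟩ := KernelFork.IsLimit.lift' (E.isLimit hx) ((𝟙 N - π ≫ σ) ≫ χ) (by
    rw [Category.assoc, ← hpb.w]
    simp)
  change ρ ≫ x' = (𝟙 N - π ≫ σ) ≫ χ at hρ
  have hκπ : κ ≫ π = 0 := hpb.lift_fst _ _ _
  have hκχ : κ ≫ χ = x' := hpb.lift_snd _ _ _
  have hσχ : σ ≫ χ = 0 := hpb.lift_snd _ _ _
  refine HasBinaryBiproduct.mk
    ⟨⟨N, ρ, π, κ, σ, ?_, hκπ, ?_, hσπ⟩, isBinaryBilimitOfTotal _ ?_⟩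
  · rw [← cancel_mono x', Category.assoc, hρ]
    simp [Preadditive.comp_sub, reassoc_of% hκπ, hκχ]
  · rw [← cancel_mono x', Category.assoc, hρ]
    simp [hσχ]
  · apply hpb.hom_ext
    · simp [Preadditive.add_comp, hκπ, hσπ]
    · simp [Preadditive.add_comp, hρ, hσχ, hκχ, Preadditive.sub_comp]

lemma exists_iteratedPullback {J : Type*} [DecidableEq J] {Y Z : J → C} (d : ∀ j, Y j ⟶ Z j)
    (hd : ∀ j, IsDeflationIn E.conflations (d j)) {B : C} (m : ∀ j, B ⟶ Z j) {s : Finset J}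
    (hs : s.Nonempty) :
    ∃ (W : C) (p : W ⟶ B) (q : ∀ j, W ⟶ Y j), IsDeflationIn E.conflations p ∧
      (∀ j ∈ s, q j ≫ d j = p ≫ m j) ∧
      (∀ {T : C} (t : T ⟶ B) (y : ∀ j, T ⟶ Y j), (∀ j ∈ s, y j ≫ d j = t ≫ m j) →
        ∃ w : T ⟶ W, w ≫ p = t ∧ ∀ j ∈ s, w ≫ q j = y j) ∧
      (∀ {T : C} (a b : T ⟶ W), a ≫ p = b ≫ p → (∀ j ∈ s, a ≫ q j = b ≫ q j) →
        a = b) := by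
  induction hs using Finset.Nonempty.cons_induction with
  | singleton a =>
    obtain ⟨W, p, q, hp, hpb⟩ := E.ex2 (d a) (hd a) (m a)
    refine ⟨W, p, Function.update 0 a q, hp, ?_, fun t y hy => ?_, fun x y h₁ h₂ => ?_⟩
    · rintro j hj
      obtain rfl := Finset.mem_singleton.1 hj
      rw [Function.update_self, hpb.w]
    · refine ⟨hpb.lift t (y a) (hy a (Finset.mem_singleton_self a)).symm, hpb.lift_fst _ _ _,
        fun j hj => ?_⟩
      obtain rfl := Finset.mem_singleton.1 hj
      rw [Function.update_self, hpb.lift_snd]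
    · refine hpb.hom_ext h₁ ?_
      simpa using h₂ a (Finset.mem_singleton_self a)
  | cons a s ha hs ih =>
    obtain ⟨W, p, q, hp, hq, hex, huniq⟩ := ih
    obtain ⟨W', p', q', hp', hpb⟩ := E.ex2 (d a) (hd a) (p ≫ m a)
    have hne : ∀ j ∈ s, j ≠ a := fun j hj h => ha (h ▸ hj)
    refine ⟨W', p' ≫ p, Function.update (fun j => p' ≫ q j) a q', E.ex1 p' p hp' hp,
      fun j hj => ?_, fun t y hy => ?_, fun x y h₁ h₂ => ?_⟩
    · rcases Finset.mem_cons.1 hj with rfl | hj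
      · rw [Function.update_self, ← hpb.w, Category.assoc]
      · rw [Function.update_of_ne (hne j hj), Category.assoc, hq j hj, Category.assoc]
    · obtain ⟨w, hwp, hwq⟩ := hex t y fun j hj => hy j (Finset.mem_cons_of_mem hj)
      refine ⟨hpb.lift w (y a) ?_, by rw [← Category.assoc, hpb.lift_fst, hwp],
        fun j hj => ?_⟩
      · rw [← Category.assoc, hwp, hy a (Finset.mem_cons_self a s)]
      rcases Finset.mem_cons.1 hj with rfl | hj
      · rw [Function.update_self, hpb.lift_snd]
      · rw [Function.update_of_ne (hne j hj), ← Category.assoc, hpb.lift_fst, hwq j hj]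
    · refine hpb.hom_ext (huniq _ _ (by simpa using h₁) fun j hj => ?_) ?_
      · simpa [Function.update_of_ne (hne j hj)] using h₂ j (Finset.mem_cons_of_mem hj)
      · simpa using h₂ a (Finset.mem_cons_self a s)

/-- The direct sum is isomorphic to the iterated pullback of the `d j` along the projections. -/
lemma isDeflationIn_biproduct_map {J : Type*} [Fintype J] [Nonempty J] {Y Z : J → C}
    [HasBiproduct Y] [HasBiproduct Z] (d : ∀ j, Y j ⟶ Z j)
    (hd : ∀ j, IsDeflationIn E.conflations (d j)) :
    IsDeflationIn E.conflations (biproduct.map d) := by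
  classical
  obtain ⟨W, p, q, hp, hq, hex, huniq⟩ :=
    exists_iteratedPullback d hd (biproduct.π Z) Finset.univ_nonempty
  obtain ⟨α, hαp, hαq⟩ :=
    hex (biproduct.map d) (biproduct.π Y) fun j _ => (biproduct.map_π d j).symm
  have hβ : biproduct.lift q ≫ biproduct.map d = p :=
    biproduct.hom_ext _ _ fun j => by simp [hq j (Finset.mem_univ j)]
  let e : ⨁ Y ≅ W :=
    { hom := α
      inv := biproduct.lift q
      hom_inv_id := biproduct.hom_ext _ _ fun j => by simp [hαq j (Finset.mem_univ j)]
      inv_hom_id := huniq _ _ (by simp [hαp, hβ]) fun j _ => by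
        simp [hαq j (Finset.mem_univ j)] }
  simpa [e, hαp] using isDeflationIn_iso_hom_comp hp e

end ExactStructure

lemma NatInvertibleIn.nsmul_cancel [Preadditive A] {n : ℕ} (h : NatInvertibleIn n A) {X Y : A}
    {a b : X ⟶ Y} (hab : n • a = n • b) : a = b :=
  (h (n • b)).unique hab rfl

namespace GAction

variable (act : GAction G A)

noncomputable def unitIso : act.F 1 ≅ 𝟭 A :=
  haveI := act.equiv 1
  Functor.fullyFaithfulCancelRight (act.F 1)
    (act.δ 1 1 ≪≫ eqToIso (congrArg act.F (mul_one 1)) ≪≫ (Functor.leftUnitor _).symm)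

lemma map_unitIso_hom_app (X : A) :
    (act.F 1).map (act.unitIso.hom.app X) =
      (act.δ 1 1).hom.app X ≫ eqToHom (congrArg (fun m => (act.F m).obj X) (mul_one 1)) := by
  have := act.equiv 1
  simp [unitIso, eqToHom_app]

lemma δ_hom_app_congr {g g' h h' : G} (eg : g = g') (eh : h = h') (X : A) :
    (act.δ g h).hom.app X =
      eqToHom (by rw [eg, eh]) ≫ (act.δ g' h').hom.app X ≫ eqToHom (by rw [eg, eh]) := by
  subst eg eh
  simp

/-- This is the cocycle condition for the triple `(1, 1, k)`. -/
lemma unitIso_hom_app_obj (k : G) (Z : A) :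
    act.unitIso.hom.app ((act.F k).obj Z) =
      (act.δ 1 k).hom.app Z ≫ eqToHom (congrArg (fun m => (act.F m).obj Z) (mul_one k)) := by
  have := act.equiv 1
  apply (act.F 1).map_injective
  have coc := act.cocycle 1 1 k Z
  rw [act.δ_hom_app_congr rfl (mul_one k) Z, act.δ_hom_app_congr (mul_one 1) rfl Z] at coc
  simp only [Category.assoc, eqToHom_trans] at coc
  rw [← cancel_mono ((act.δ 1 k).hom.app Z ≫
    eqToHom (congrArg (fun m => (act.F m).obj Z) (by rw [one_mul] : k * 1 = k * (1 * 1))))]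
  rw [map_unitIso_hom_app, Functor.map_comp, eqToHom_map]
  simpa using coc.symm

end GAction

namespace EqObj

variable {act : GAction G A}

lemma lam_congr (X : EqObj act) {m m' : G} (e : m = m') :
    (X.lam m).hom = eqToHom (congrArg (fun k => (act.F k).obj X.obj) e) ≫ (X.lam m').hom := by
  subst e
  simp

lemma lam_one_hom (X : EqObj act) : (X.lam 1).hom = act.unitIso.hom.app X.obj := by
  have := act.equiv 1
  apply (act.F 1).map_injective
  have := X.compat 1 1
  rw [X.lam_congr (mul_one 1), ← Category.assoc] at this
  rw [act.map_unitIso_hom_app, (cancel_mono _).1 this]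

lemma comm_inv {X Y : EqObj act} (u : X ⟶ Y) (g : G) :
    u.f ≫ (Y.lam g).inv = (X.lam g).inv ≫ (act.F g).map u.f := by
  rw [Iso.eq_inv_comp, ← Category.assoc, ← u.comm, Category.assoc, Iso.hom_inv_id,
    Category.comp_id]

lemma map_lam_inv_δ (X : EqObj act) (h g : G) :
    (act.F h).map (X.lam g).inv ≫ (act.δ h g).hom.app X.obj =
      (X.lam h).hom ≫ (X.lam (g * h)).inv := by
  rw [← cancel_mono (X.lam (g * h)).hom, Category.assoc, Category.assoc, ← X.compat h g,
    Iso.inv_hom_id, Category.comp_id, ← Category.assoc, ← Functor.map_comp, Iso.inv_hom_id]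
  simp

/-- `F_g (hom g⁻¹) ≫ hom g = δ ≫ hom 1` is invertible, so every `hom g` is a split epi; hence
`F_g (hom g⁻¹)` is a split epi and a mono, thus invertible. -/
lemma isIso_of_compat {V : A} (hom : ∀ g, (act.F g).obj V ⟶ V)
    (compat : ∀ g h, (act.F g).map (hom h) ≫ hom g = (act.δ g h).hom.app V ≫ hom (h * g))
    (hom_one : hom 1 = act.unitIso.hom.app V) (g : G) : IsIso (hom g) := by
  have iso_of_eq_one : ∀ k, k = 1 → IsIso (hom k) := by
    rintro k rfl
    rw [hom_one]
    infer_instance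
  have iso_comp : ∀ g, IsIso ((act.F g).map (hom g⁻¹) ≫ hom g) := fun g => by
    rw [compat]
    have := iso_of_eq_one _ (inv_mul_cancel g)
    infer_instance
  have split : ∀ g, IsSplitEpi (hom g) := fun g =>
    IsSplitEpi.mk'
      ⟨inv ((act.F g).map (hom g⁻¹) ≫ hom g) ≫ (act.F g).map (hom g⁻¹), by simp⟩
  have := split g⁻¹
  have : Mono ((act.F g).map (hom g⁻¹)) := mono_of_mono _ (hom g)
  have := isIso_of_mono_of_isSplitEpi ((act.F g).map (hom g⁻¹))
  exact IsIso.of_isIso_comp_left ((act.F g).map (hom g⁻¹)) (hom g)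

noncomputable abbrev ofCompat (V : A) (hom : ∀ g, (act.F g).obj V ⟶ V)
    (compat : ∀ g h, (act.F g).map (hom h) ≫ hom g = (act.δ g h).hom.app V ≫ hom (h * g))
    (hom_one : hom 1 = act.unitIso.hom.app V) : EqObj act where
  obj := V
  lam g := haveI := isIso_of_compat hom compat hom_one g; asIso (hom g)
  compat := compat

variable {ι : Type*}

noncomputable def ofJointlyMono {Y : ι → EqObj act} {K : A} {m : ∀ j, K ⟶ (Y j).obj}
    (hm : JointlyMono m) (hom : ∀ g, (act.F g).obj K ⟶ K)
    (hom_m : ∀ g j, hom g ≫ m j = (act.F g).map (m j) ≫ ((Y j).lam g).hom) : EqObj act :=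
  ofCompat K hom
    (fun g h => hm _ _ fun j => by
      simp only [Category.assoc, hom_m, ← Functor.map_comp_assoc]
      rw [Functor.map_comp_assoc, (Y j).compat, ← (act.δ g h).hom.naturality_assoc]
      rfl)
    (hm _ _ fun j => by rw [hom_m, lam_one_hom, act.unitIso.hom.naturality]; rfl)

noncomputable def ofJointlyEpi {Y : ι → EqObj act} {K : A} {m : ∀ j, (Y j).obj ⟶ K}
    (hm : JointlyEpi m) (hom : ∀ g, (act.F g).obj K ⟶ K)
    (m_hom : ∀ g j, (act.F g).map (m j) ≫ hom g = ((Y j).lam g).hom ≫ m j) : EqObj act :=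
  ofCompat K hom
    (fun g h => by
      have := act.equiv g
      have := act.equiv h
      refine hm.map (act.F h ⋙ act.F g) _ _ fun j => ?_
      have nat := (act.δ g h).hom.naturality (m j)
      simp only [Functor.comp_map] at nat ⊢
      rw [← Functor.map_comp_assoc, m_hom, Functor.map_comp_assoc, m_hom, ← Category.assoc,
        (Y j).compat, reassoc_of% nat, m_hom, Category.assoc])
    (by
      have := act.equiv 1
      refine hm.map (act.F 1) _ _ fun j => ?_
      rw [m_hom, lam_one_hom]
      exact (act.unitIso.hom.naturality (m j)).symm)

def liftOfJointlyMono {X K : EqObj act} {Y : ι → EqObj act} {m : ∀ j, K ⟶ Y j}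
    (hm : JointlyMono fun j => (m j).f) (u : X.obj ⟶ K.obj) (w : ∀ j, X ⟶ Y j)
    (hw : ∀ j, u ≫ (m j).f = (w j).f) : X ⟶ K :=
  ⟨u, fun g => hm _ _ fun j => by
    beta_reduce
    rw [Category.assoc, Category.assoc, ← (m j).comm, ← Functor.map_comp_assoc, hw,
      (w j).comm]⟩

def descOfJointlyEpi {X K : EqObj act} {Y : ι → EqObj act} {m : ∀ j, Y j ⟶ K}
    (hm : JointlyEpi fun j => (m j).f) (u : K.obj ⟶ X.obj) (w : ∀ j, Y j ⟶ X)
    (hw : ∀ j, (m j).f ≫ u = (w j).f) : K ⟶ X :=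
  ⟨u, fun g => by
    have := act.equiv g
    refine hm.map (act.F g) _ _ fun j => ?_
    rw [← Functor.map_comp_assoc, hw, (w j).comm, ← Category.assoc, (m j).comm, Category.assoc,
      hw]⟩

instance : (forget act).Faithful := ⟨fun h => hom_ext h⟩

lemma isPullback_of_isPullback_f {P X Y Z : EqObj act} {fst : P ⟶ X} {snd : P ⟶ Y}
    {f : X ⟶ Z} {g : Y ⟶ Z} (h : IsPullback fst.f snd.f f.f g.f) : IsPullback fst snd f g :=
  IsPullback.of_isLimit <| PullbackCone.IsLimit.mk (hom_ext h.w)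
    (fun s => liftOfJointlyMono (Y := fun b => cond b X Y)
      (m := fun | true => fst | false => snd) (fun _ _ _ hab => h.hom_ext (hab true) (hab false))
      (h.lift s.fst.f s.snd.f (congrArg EqHom.f s.condition))
      (fun | true => s.fst | false => s.snd) (by rintro (_ | _) <;> simp))
    (fun _ => hom_ext (h.lift_fst _ _ _)) (fun _ => hom_ext (h.lift_snd _ _ _))
    fun _ _ h₁ h₂ => hom_ext (h.hom_ext ((congrArg EqHom.f h₁).trans (h.lift_fst _ _ _).symm)
      ((congrArg EqHom.f h₂).trans (h.lift_snd _ _ _).symm))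

lemma isPushout_of_isPushout_f {Z X Y P : EqObj act} {f : Z ⟶ X} {g : Z ⟶ Y}
    {inl : X ⟶ P} {inr : Y ⟶ P} (h : IsPushout f.f g.f inl.f inr.f) : IsPushout f g inl inr :=
  IsPushout.of_isColimit <| PushoutCocone.IsColimit.mk (hom_ext h.w)
    (fun s => descOfJointlyEpi (Y := fun b => cond b X Y)
      (m := fun | true => inl | false => inr) (fun _ _ _ hab => h.hom_ext (hab true) (hab false))
      (h.desc s.inl.f s.inr.f (congrArg EqHom.f s.condition))
      (fun | true => s.inl | false => s.inr) (by rintro (_ | _) <;> simp))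
    (fun _ => hom_ext (h.inl_desc _ _ _)) (fun _ => hom_ext (h.inr_desc _ _ _))
    fun _ _ h₁ h₂ => hom_ext (h.hom_ext ((congrArg EqHom.f h₁).trans (h.inl_desc _ _ _).symm)
      ((congrArg EqHom.f h₂).trans (h.inr_desc _ _ _).symm))

section ExactStructure

variable [Preadditive A] [∀ g : G, (act.F g).Additive]

def conflations (act : GAction G A) [∀ g : G, (act.F g).Additive] (E : ExactStructure A) :
    Set (Conflation (EqObj act)) :=
  {c | IsKerCokerPair c ∧ c.map (forget act) ∈ E.conflations}

variable {E : ExactStructure A}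

lemma isKerCokerPair_of_mem {c : Conflation (EqObj act)}
    (hc : c.map (forget act) ∈ E.conflations) : IsKerCokerPair c := by
  have : Mono c.i.f := E.mono_i hc
  have : Epi c.d.f := E.epi_d hc
  have : Mono c.i := (forget act).mono_of_mono_map ‹Mono c.i.f›
  have : Epi c.d := (forget act).epi_of_epi_map ‹Epi c.d.f›
  have w : c.i ≫ c.d = 0 := hom_ext (E.comp_eq_zero hc)
  refine ⟨w, ⟨KernelFork.IsLimit.ofι' c.i w fun t ht => ?_⟩,
    ⟨CokernelCofork.IsColimit.ofπ' c.d w fun t ht => ?_⟩⟩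
  · obtain ⟨l, hl⟩ := KernelFork.IsLimit.lift' (E.isLimit hc) t.f (congrArg EqHom.f ht)
    exact ⟨liftOfJointlyMono (JointlyMono.of_mono c.i.f) l (fun _ => t) fun _ => hl, hom_ext hl⟩
  · obtain ⟨l, hl⟩ := CokernelCofork.IsColimit.desc' (E.isColimit hc) t.f (congrArg EqHom.f ht)
    exact ⟨descOfJointlyEpi (JointlyEpi.of_epi c.d.f) l (fun _ => t) fun _ => hl, hom_ext hl⟩

lemma mem_conflations_iff {c : Conflation (EqObj act)} :
    c ∈ conflations act E ↔ c.map (forget act) ∈ E.conflations :=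
  ⟨And.right, fun h => ⟨isKerCokerPair_of_mem h, h⟩⟩

lemma isDeflationIn_conflations {Y W : EqObj act} (q : Y ⟶ W)
    (hq : IsDeflationIn E.conflations q.f) : IsDeflationIn (conflations act E) q := by
  obtain ⟨K, i, hc⟩ := hq
  have : Mono i := E.mono_i hc
  have lift g := KernelFork.IsLimit.lift' (E.isLimit hc) ((act.F g).map i ≫ (Y.lam g).hom) (by
    rw [Category.assoc, ← q.comm, ← Functor.map_comp_assoc]
    simp [E.comp_eq_zero hc])
  let K' := ofJointlyMono (Y := fun _ : Unit => Y) (JointlyMono.of_mono i) (fun g => (lift g).1)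
    fun g _ => (lift g).2
  exact ⟨K', ⟨i, fun g => ((lift g).2).symm⟩, mem_conflations_iff.2 hc⟩

lemma isInflationIn_conflations {X Y : EqObj act} (q : X ⟶ Y)
    (hq : IsInflationIn E.conflations q.f) : IsInflationIn (conflations act E) q := by
  obtain ⟨Z, d, hc⟩ := hq
  have : Epi d := E.epi_d hc
  have desc g := CokernelCofork.IsColimit.desc'
    (haveI := act.equiv g; isColimitCoforkMapOfIsColimit' (act.F g) _ (E.isColimit hc))
    ((Y.lam g).hom ≫ d) (by
      rw [← Category.assoc, q.comm, Category.assoc]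
      simp [E.comp_eq_zero hc])
  let Z' := ofJointlyEpi (Y := fun _ : Unit => Y) (JointlyEpi.of_epi d) (fun g => (desc g).1)
    fun g _ => (desc g).2
  exact ⟨Z', ⟨d, fun g => (desc g).2⟩, mem_conflations_iff.2 hc⟩

lemma exists_isPullback {Y Z Z' : EqObj act} (d : Y ⟶ Z)
    (hd : IsDeflationIn (conflations act E) d) (f : Z' ⟶ Z) :
    ∃ (Y' : EqObj act) (d' : Y' ⟶ Z') (f' : Y' ⟶ Y),
      IsDeflationIn (conflations act E) d' ∧ IsPullback d' f' f d := by
  obtain ⟨X, i, hc⟩ := hd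
  obtain ⟨Y', d', f', hd', hpb⟩ := E.ex2 d.f ⟨X.obj, i.f, hc.2⟩ f.f
  let hom g : (act.F g).obj Y' ⟶ Y' :=
    hpb.lift ((act.F g).map d' ≫ (Z'.lam g).hom) ((act.F g).map f' ≫ (Y.lam g).hom) (by
      simp only [Category.assoc, ← f.comm, ← d.comm, ← Functor.map_comp_assoc, hpb.w])
  let Y'' := ofJointlyMono (Y := fun b => cond b Z' Y) (m := fun | true => d' | false => f')
    (fun _ _ _ hab => hpb.hom_ext (hab true) (hab false)) hom
    (by rintro g (_ | _); exacts [hpb.lift_snd _ _ _, hpb.lift_fst _ _ _])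
  let d'' : Y'' ⟶ Z' := ⟨d', fun g => (hpb.lift_fst _ _ _).symm⟩
  let f'' : Y'' ⟶ Y := ⟨f', fun g => (hpb.lift_snd _ _ _).symm⟩
  exact ⟨Y'', d'', f'', isDeflationIn_conflations d'' hd', isPullback_of_isPullback_f hpb⟩

lemma exists_isPushout {X Y X' : EqObj act} (i : X ⟶ Y)
    (hi : IsInflationIn (conflations act E) i) (h : X ⟶ X') :
    ∃ (Y' : EqObj act) (i' : X' ⟶ Y') (h' : Y ⟶ Y'),
      IsInflationIn (conflations act E) i' ∧ IsPushout i h h' i' := by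
  obtain ⟨Z, d, hc⟩ := hi
  obtain ⟨Y', i', h', hi', hpo⟩ := E.ex2op i.f ⟨Z.obj, d.f, hc.2⟩ h.f
  let hom g : (act.F g).obj Y' ⟶ Y' :=
    (haveI := act.equiv g; hpo.map (act.F g)).desc ((Y.lam g).hom ≫ h') ((X'.lam g).hom ≫ i')
      (by simp only [← Category.assoc, i.comm, h.comm]; simp only [Category.assoc, hpo.w])
  let Y'' := ofJointlyEpi (Y := fun b => cond b Y X') (m := fun | true => h' | false => i')
    (fun _ _ _ hab => hpo.hom_ext (hab true) (hab false)) hom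
    (by rintro g (_ | _); exacts [IsPushout.inr_desc _ _ _ _, IsPushout.inl_desc _ _ _ _])
  let i'' : X' ⟶ Y'' := ⟨i', fun g => IsPushout.inr_desc _ _ _ _⟩
  let h'' : Y ⟶ Y'' := ⟨h', fun g => IsPushout.inl_desc _ _ _ _⟩
  exact ⟨Y'', i'', h'', isInflationIn_conflations i'' hi', isPushout_of_isPushout_f hpo⟩

variable (act E) in
def exactStructure : ExactStructure (EqObj act) where
  conflations := conflations act E
  kerCoker _ hc := hc.1
  iso_closed _ hc _ := fun ⟨eX, eY, eZ, h₁, h₂⟩ => mem_conflations_iff.2 <|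
    E.iso_closed _ hc.2 _ ⟨(forget act).mapIso eX, (forget act).mapIso eY, (forget act).mapIso eZ,
      congrArg EqHom.f h₁, congrArg EqHom.f h₂⟩
  ex0 Z hZ := isDeflationIn_conflations (𝟙 Z) (E.ex0 Z.obj ((forget act).map_isZero hZ))
  ex1 d d' := fun ⟨_, _, hc⟩ ⟨_, _, hc'⟩ =>
    isDeflationIn_conflations (d ≫ d') (E.ex1 d.f d'.f ⟨_, _, hc.2⟩ ⟨_, _, hc'.2⟩)
  ex2 := exists_isPullback
  ex2op := exists_isPushout

end ExactStructure

section Averaging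

variable [Preadditive A] [∀ g : G, (act.F g).Additive] [Fintype G] {E : ExactStructure A}

noncomputable def twistedSum (X : EqObj act) {Z W : A} (u : X.obj ⟶ Z)
    (s : ∀ g, (act.F g).obj Z ⟶ W) : X.obj ⟶ W :=
  ∑ g, (X.lam g).inv ≫ (act.F g).map u ≫ s g

/-- Reindex the sum along `g ↦ g * h`. -/
lemma map_twistedSum_comp_lam {X Y : EqObj act} {Z : A} (u : X.obj ⟶ Z)
    {s : ∀ g, (act.F g).obj Z ⟶ Y.obj}
    (hs : ∀ h g, (act.F h).map (s g) ≫ (Y.lam h).hom = (act.δ h g).hom.app Z ≫ s (g * h))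
    (h : G) :
    (act.F h).map (X.twistedSum u s) ≫ (Y.lam h).hom = (X.lam h).hom ≫ X.twistedSum u s := by
  rw [twistedSum, Functor.map_sum, Preadditive.sum_comp, Preadditive.comp_sum]
  refine Fintype.sum_equiv (Equiv.mulRight h) _ _ fun g => ?_
  have nat := (act.δ h g).hom.naturality u
  simp only [Functor.comp_map] at nat
  simp only [Equiv.coe_mulRight, Functor.map_comp, Category.assoc, hs]
  rw [reassoc_of% nat, ← reassoc_of% (X.map_lam_inv_δ h g)]

noncomputable def transfer (X Y : EqObj act) (u : X.obj ⟶ Y.obj) : X ⟶ Y :=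
  ⟨X.twistedSum u fun g => (Y.lam g).hom, map_twistedSum_comp_lam u Y.compat⟩

lemma transfer_f_comp {X Y Y' : EqObj act} (u : X.obj ⟶ Y.obj) (w : Y ⟶ Y') :
    (transfer X Y u).f ≫ w.f = (transfer X Y' (u ≫ w.f)).f := by
  simp [transfer, twistedSum, Preadditive.sum_comp, w.comm]

lemma comp_transfer_f {X' X Y : EqObj act} (w : X' ⟶ X) (u : X.obj ⟶ Y.obj) :
    w.f ≫ (transfer X Y u).f = (transfer X' Y (w.f ≫ u)).f := by
  simp [transfer, twistedSum, Preadditive.comp_sum, reassoc_of% (comm_inv w)]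

lemma transfer_f_eq {X Y : EqObj act} (w : X ⟶ Y) :
    (transfer X Y w.f).f = Fintype.card G • w.f := by
  simp [transfer, twistedSum, w.comm]

lemma exists_nsmul_eq (hinv : NatInvertibleIn (Fintype.card G) A) {X Y : EqObj act}
    (w : X ⟶ Y) : ∃ u : X ⟶ Y, Fintype.card G • u.f = w.f := by
  obtain ⟨u, hu, -⟩ := hinv w.f
  refine ⟨⟨u, fun g => hinv.nsmul_cancel ?_⟩, hu⟩
  rw [← Preadditive.nsmul_comp, ← Functor.map_nsmul, hu, w.comm, ← Preadditive.comp_nsmul, hu]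

lemma isProjectiveIn_of_obj (hinv : NatInvertibleIn (Fintype.card G) A) {P : EqObj act}
    (hP : IsProjectiveIn E.conflations P.obj) : IsProjectiveIn (conflations act E) P := by
  rintro Y Z d ⟨X, i, hc⟩ f
  obtain ⟨u₀, hu₀⟩ := hP d.f ⟨X.obj, i.f, hc.2⟩ f.f
  obtain ⟨u, hu⟩ := exists_nsmul_eq hinv (transfer P Y u₀)
  refine ⟨u, hom_ext (hinv.nsmul_cancel ?_)⟩
  change _ • (u.f ≫ d.f) = _
  rw [← Preadditive.nsmul_comp, hu, transfer_f_comp, hu₀, transfer_f_eq]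

lemma isInjectiveIn_of_obj (hinv : NatInvertibleIn (Fintype.card G) A) {I : EqObj act}
    (hI : IsInjectiveIn E.conflations I.obj) : IsInjectiveIn (conflations act E) I := by
  rintro X Y i ⟨Z, d, hc⟩ f
  obtain ⟨u₀, hu₀⟩ := hI i.f ⟨Z.obj, d.f, hc.2⟩ f.f
  obtain ⟨u, hu⟩ := exists_nsmul_eq hinv (transfer Y I u₀)
  refine ⟨u, hom_ext (hinv.nsmul_cancel ?_)⟩
  change _ • (i.f ≫ u.f) = _
  rw [← Preadditive.comp_nsmul, hu, comp_transfer_f, hu₀, transfer_f_eq]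

end Averaging

section Induction

variable [Preadditive A] [∀ g : G, (act.F g).Additive] [HasBinaryBiproducts A] [Fintype G]
  {E : ExactStructure A}

variable (act) in
noncomputable def indLam (Z : A) (h : G) :
    (act.F h).obj (⨁ fun g => (act.F g).obj Z) ⟶ ⨁ fun g => (act.F g).obj Z :=
  ∑ g, (act.F h).map (biproduct.π _ g) ≫ (act.δ h g).hom.app Z ≫
    biproduct.ι (fun g => (act.F g).obj Z) (g * h)

lemma map_ι_indLam (Z : A) (h g : G) :
    (act.F h).map (biproduct.ι _ g) ≫ indLam act Z h =
      (act.δ h g).hom.app Z ≫ biproduct.ι (fun g => (act.F g).obj Z) (g * h) := by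
  rw [indLam, Preadditive.comp_sum, Finset.sum_eq_single g]
  · simp [← Functor.map_comp_assoc]
  · intro k _ hk
    rw [← Functor.map_comp_assoc, biproduct.ι_π_ne _ (Ne.symm hk), Functor.map_zero, zero_comp]
  · simp

lemma indLam_compat (Z : A) (g h : G) :
    (act.F g).map (indLam act Z h) ≫ indLam act Z g =
      (act.δ g h).hom.app _ ≫ indLam act Z (h * g) := by
  refine hom_ext_of_map_ι (act.F h ⋙ act.F g) fun k => ?_
  have nat := (act.δ g h).hom.naturality (biproduct.ι (fun g => (act.F g).obj Z) k)
  simp only [Functor.comp_map] at nat ⊢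
  rw [← Functor.map_comp_assoc, map_ι_indLam, Functor.map_comp_assoc, map_ι_indLam,
    reassoc_of% nat, map_ι_indLam, ← reassoc_of% (act.cocycle g h k Z),
    ← biproduct.eqToHom_comp_ι _ (mul_assoc k h g)]

lemma indLam_one (Z : A) : indLam act Z 1 = act.unitIso.hom.app _ := by
  refine hom_ext_of_map_ι (act.F 1) fun k => ?_
  rw [map_ι_indLam, act.unitIso.hom.naturality, act.unitIso_hom_app_obj, Category.assoc,
    Functor.id_map, ← biproduct.eqToHom_comp_ι _ (mul_one k)]

variable (act) in
/-- The induced object `Ind Z = ⊕_g F_g Z`. -/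
noncomputable abbrev induced (Z : A) : EqObj act :=
  ofCompat _ (indLam act Z) (indLam_compat Z) (indLam_one Z)

lemma map_biproduct_map_indLam {Y Z : A} (d : Y ⟶ Z) (h : G) :
    (act.F h).map (biproduct.map fun g => (act.F g).map d) ≫ indLam act Z h =
      indLam act Y h ≫ biproduct.map fun g => (act.F g).map d := by
  refine hom_ext_of_map_ι (act.F h) fun g => ?_
  have nat := (act.δ h g).hom.naturality d
  simp only [Functor.comp_map] at nat
  rw [← Functor.map_comp_assoc, biproduct.ι_map, Functor.map_comp_assoc, map_ι_indLam,
    reassoc_of% map_ι_indLam, biproduct.ι_map, reassoc_of% nat]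

noncomputable def indMap {Y Z : A} (d : Y ⟶ Z) : induced act Y ⟶ induced act Z :=
  ⟨biproduct.map fun g => (act.F g).map d, map_biproduct_map_indLam d⟩

noncomputable def toInduced (P : EqObj act) {Z : A} (f : P.obj ⟶ Z) : P ⟶ induced act Z :=
  ⟨P.twistedSum f (biproduct.ι _),
    map_twistedSum_comp_lam (Y := induced act Z) f (map_ι_indLam Z)⟩

lemma map_biproduct_desc_lam (I : EqObj act) {X : A} (f : X ⟶ I.obj) (h : G) :
    (act.F h).map (biproduct.desc fun g => (act.F g).map f ≫ (I.lam g).hom) ≫ (I.lam h).hom =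
      indLam act X h ≫ biproduct.desc fun g => (act.F g).map f ≫ (I.lam g).hom := by
  refine hom_ext_of_map_ι (act.F h) fun g => ?_
  have nat := (act.δ h g).hom.naturality f
  simp only [Functor.comp_map] at nat
  rw [← Functor.map_comp_assoc, biproduct.ι_desc, Functor.map_comp_assoc, I.compat,
    reassoc_of% nat, reassoc_of% map_ι_indLam, biproduct.ι_desc]

noncomputable def fromInduced (I : EqObj act) {X : A} (f : X ⟶ I.obj) : induced act X ⟶ I :=
  ⟨biproduct.desc fun g => (act.F g).map f ≫ (I.lam g).hom, map_biproduct_desc_lam I f⟩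

lemma toInduced_f_π_one (P : EqObj act) {Z : A} (f : P.obj ⟶ Z) :
    (toInduced P f).f ≫ biproduct.π (fun g => (act.F g).obj Z) 1 ≫ act.unitIso.hom.app Z =
      f := by
  have : (toInduced P f).f ≫ biproduct.π (fun g => (act.F g).obj Z) 1 =
      (P.lam 1).inv ≫ (act.F 1).map f := by
    change P.twistedSum f (biproduct.ι _) ≫ _ = _
    rw [twistedSum, Preadditive.sum_comp, Finset.sum_eq_single 1]
    · simp
    · intro g _ hg
      simp [biproduct.ι_π_ne _ hg]
    · simp
  rw [reassoc_of% this, act.unitIso.hom.naturality, ← lam_one_hom]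
  simp

lemma ι_one_fromInduced_f (I : EqObj act) {X : A} (f : X ⟶ I.obj) :
    act.unitIso.inv.app X ≫ biproduct.ι (fun g => (act.F g).obj X) 1 ≫ (fromInduced I f).f =
      f := by
  rw [fromInduced, biproduct.ι_desc, lam_one_hom, act.unitIso.hom.naturality]
  simp

lemma mem_conflations_indMap
    (hadm : ∀ g : G, ∀ c ∈ E.conflations, c.map (act.F g) ∈ E.conflations) {X Y Z : A}
    {i : X ⟶ Y} {d : Y ⟶ Z} (hc : Conflation.mk X Y Z i d ∈ E.conflations) :
    Conflation.mk (induced act X) (induced act Y) (induced act Z) (indMap i) (indMap d) ∈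
      conflations act E :=
  mem_conflations_iff.2 <| ExactStructure.mem_of_isLimit
    (ExactStructure.isDeflationIn_biproduct_map _ fun g => ⟨_, _, hadm g _ hc⟩)
    (isLimitBiproductMap fun g => E.isLimit (hadm g _ hc))

end Induction

variable [Preadditive A] [∀ g : G, (act.F g).Additive] [Fintype G] {E : ExactStructure A}

lemma isProjectiveIn_obj
    (hadm : ∀ g : G, ∀ c ∈ E.conflations, c.map (act.F g) ∈ E.conflations)
    {P : EqObj act} (hP : IsProjectiveIn (conflations act E) P) :
    IsProjectiveIn E.conflations P.obj := by
  rintro Y Z d ⟨X, i, hc⟩ f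
  have := E.hasBinaryBiproducts hc
  obtain ⟨l, hl⟩ := hP (indMap d) ⟨_, _, mem_conflations_indMap hadm hc⟩ (toInduced P f)
  refine ⟨l.f ≫ biproduct.π _ 1 ≫ act.unitIso.hom.app Y, ?_⟩
  have hl' : l.f ≫ biproduct.map (fun g => (act.F g).map d) = (toInduced P f).f :=
    congrArg EqHom.f hl
  have nat : (act.F 1).map d ≫ act.unitIso.hom.app Z = act.unitIso.hom.app Y ≫ d :=
    act.unitIso.hom.naturality d
  have key :
      l.f ≫ biproduct.π _ 1 ≫ (act.F 1).map d = (toInduced P f).f ≫ biproduct.π _ 1 := by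
    rw [← hl', Category.assoc, biproduct.map_π]
  rw [Category.assoc, Category.assoc, ← nat, reassoc_of% key, toInduced_f_π_one]

lemma isInjectiveIn_obj
    (hadm : ∀ g : G, ∀ c ∈ E.conflations, c.map (act.F g) ∈ E.conflations)
    {I : EqObj act} (hI : IsInjectiveIn (conflations act E) I) :
    IsInjectiveIn E.conflations I.obj := by
  rintro X Y i ⟨Z, d, hc⟩ f
  have := E.hasBinaryBiproducts hc
  obtain ⟨ρ, hρ⟩ := hI (indMap i) ⟨_, _, mem_conflations_indMap hadm hc⟩ (fromInduced I f)
  refine ⟨act.unitIso.inv.app Y ≫ biproduct.ι (fun g => (act.F g).obj Y) 1 ≫ ρ.f, ?_⟩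
  have hρ' : biproduct.map (fun g => (act.F g).map i) ≫ ρ.f = (fromInduced I f).f :=
    congrArg EqHom.f hρ
  have nat : i ≫ act.unitIso.inv.app Y = act.unitIso.inv.app X ≫ (act.F 1).map i :=
    act.unitIso.inv.naturality i
  have key : (act.F 1).map i ≫ biproduct.ι (fun g => (act.F g).obj Y) 1 ≫ ρ.f =
      biproduct.ι _ 1 ≫ (fromInduced I f).f := by
    rw [← hρ', biproduct.ι_map_assoc]
  rw [reassoc_of% nat, key, ι_one_fromInduced_f]

end EqObj

/-- Let `E` be an exact structure on `A` and let `G` act admissibly (each `F_g` is exact).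
Then the kernel-cokernel pairs in `A^G` whose image under the forgetful functor `ω` is a
conflation in `A` form the unique maximal exact structure on `A^G` making `ω` exact.
If `|G|` is invertible in `A`, then `Proj(A^G) = (Proj A)^G` and `Inj(A^G) = (Inj A)^G`. -/
theorem equivariant_exact_structure
    [Preadditive A] [Fintype G] (act : GAction G A) [∀ g : G, (act.F g).Additive]
    (E : ExactStructure A)
    (hadm : ∀ (g : G), ∀ c ∈ E.conflations, c.map (act.F g) ∈ E.conflations) :
    (∃ EG : ExactStructure (EqObj act),
      EG.conflations = {c : Conflation (EqObj act) |
        IsKerCokerPair c ∧ c.map (EqObj.forget act) ∈ E.conflations}) ∧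
    (∀ E' : ExactStructure (EqObj act),
      (∀ c ∈ E'.conflations, c.map (EqObj.forget act) ∈ E.conflations) →
      E'.conflations ⊆ {c : Conflation (EqObj act) |
        IsKerCokerPair c ∧ c.map (EqObj.forget act) ∈ E.conflations}) ∧
    (NatInvertibleIn (Fintype.card G) A →
      (∀ P : EqObj act,
        IsProjectiveIn {c : Conflation (EqObj act) |
          IsKerCokerPair c ∧ c.map (EqObj.forget act) ∈ E.conflations} P ↔
        IsProjectiveIn E.conflations P.obj) ∧
      (∀ I : EqObj act,
        IsInjectiveIn {c : Conflation (EqObj act) |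
          IsKerCokerPair c ∧ c.map (EqObj.forget act) ∈ E.conflations} I ↔
        IsInjectiveIn E.conflations I.obj)) :=
  ⟨⟨EqObj.exactStructure act E, rfl⟩, fun E' hE' c hc => ⟨E'.kerCoker c hc, hE' c hc⟩,
    fun hinv => ⟨fun _ => ⟨EqObj.isProjectiveIn_obj hadm, EqObj.isProjectiveIn_of_obj hinv⟩,
      fun _ => ⟨EqObj.isInjectiveIn_obj hadm, EqObj.isInjectiveIn_of_obj hinv⟩⟩⟩
end

section
/- Let D be an idempotent-complete triangulated category with an admissible G-action, |G| invertible in D, and D^G carrying the canonical triangulated structure. If T is a G-invariant tilting object of D (i.e., F_g(T) ≅ T for all g, Hom^i(T,T) = 0 for i ≠ 0, and T classically generates D), then Ind(T) is a tilting object of D^G. -/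
open CategoryTheory Limits
universe v u
variable {G : Type*} [Group G] {A : Type u} [Category.{v} A]

/-- `Ξ` is the unit of the action `act`. -/
def IsActionUnit (act : GAction G A) (Ξ : act.F (1 : G) ≅ 𝟭 A) : Prop :=
  (∀ X : A, (act.F (1 : G)).map (Ξ.hom.app X) =
      (act.δ (1 : G) (1 : G)).hom.app X ≫
        eqToHom (congrArg (fun m => (act.F m).obj X) (one_mul (1 : G)))) ∧
  (∀ X : A, Ξ.hom.app ((act.F (1 : G)).obj X) =
      (act.δ (1 : G) (1 : G)).hom.app X ≫
        eqToHom (congrArg (fun m => (act.F m).obj X) (one_mul (1 : G))))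

/-- A `G`-equivariant structure on a functor `F` between two categories with
`G`-actions. -/
structure EquivStructure {B : Type*} [Category B]
    (actA : GAction G A) (actB : GAction G B) (F : A ⥤ B) where
  φ : ∀ g : G, actA.F g ⋙ F ≅ F ⋙ actB.F g
  square : ∀ (g h : G) (X : A),
    (φ g).hom.app ((actA.F h).obj X) ≫ (actB.F g).map ((φ h).hom.app X) ≫
        (actB.δ g h).hom.app (F.obj X) =
      F.map ((actA.δ g h).hom.app X) ≫ (φ (h * g)).hom.app X
  triangle : ∀ (Ξ : actA.F (1 : G) ≅ 𝟭 A) (Υ : actB.F (1 : G) ≅ 𝟭 B),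
    IsActionUnit actA Ξ → IsActionUnit actB Υ →
    ∀ X : A, (φ (1 : G)).hom.app X ≫ Υ.hom.app (F.obj X) = F.map (Ξ.hom.app X)

section Triangulated

open ZeroObject

variable {D : Type u} [Category.{v} D] [Preadditive D] [HasZeroObject D]
  [HasShift D ℤ] [∀ n : ℤ, (shiftFunctor D n).Additive] [Pretriangulated D]
variable (act : GAction G D) [∀ g : G, (act.F g).Additive]

/-- The zero object of `A^G`. -/
noncomputable def EqObj.zeroEq : EqObj act where
  obj := 0
  lam g := (act.F g).mapZeroObject
  compat g h := (isZero_zero D).eq_of_tgt _ _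

lemma EqObj.isZero_zeroEq : IsZero (EqObj.zeroEq act) := by
  rw [IsZero.iff_id_eq_zero]
  apply EqObj.hom_ext
  exact (isZero_zero D).eq_of_tgt _ _

instance : HasZeroObject (EqObj act) := ⟨⟨EqObj.zeroEq act, EqObj.isZero_zeroEq act⟩⟩

open Pretriangulated

/-- The action `act` is admissible: each `F_g` is exact (commutes with the shift and
preserves distinguished triangles), and the commuting isomorphisms make the shift functor
`[1]` a `G`-equivariant functor. -/
structure AdmissibleOn [∀ g : G, (act.F g).CommShift ℤ] : Prop where
  exact : ∀ (g : G), ∀ T ∈ distTriang D, (act.F g).mapTriangle.obj T ∈ distTriang D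
  shift_equivariant : ∃ e : EquivStructure act act (shiftFunctor D (1 : ℤ)),
    ∀ g : G, e.φ g = ((act.F g).commShiftIso (1 : ℤ)).symm

end Triangulated

section Thick

open Pretriangulated

variable {C : Type*} [Category C] [Preadditive C] [HasZeroObject C] [HasShift C ℤ]
  [∀ n : ℤ, (shiftFunctor C n).Additive] [Pretriangulated C]

/-- A class of objects of a pretriangulated category is thick if it is closed under
isomorphism, shifts, retracts (direct summands) and extensions (cones). -/
def IsThickSet (S : Set C) : Prop :=
  (∀ X ∈ S, ∀ Y : C, Nonempty (X ≅ Y) → Y ∈ S) ∧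
  (∀ X ∈ S, ∀ n : ℤ, X⟦n⟧ ∈ S) ∧
  (∀ X ∈ S, ∀ (Y : C) (s : Y ⟶ X) (r : X ⟶ Y), s ≫ r = 𝟙 Y → Y ∈ S) ∧
  (∀ T ∈ distTriang C, T.obj₁ ∈ S → T.obj₂ ∈ S → T.obj₃ ∈ S)

/-- `T` classically generates `C` if `C` is the smallest thick subcategory of itself
containing `T`. -/
def ClassicallyGenerates (T : C) : Prop :=
  ∀ S : Set C, IsThickSet S → T ∈ S → ∀ X : C, X ∈ S

/-- `T` is a tilting object: self-extensions vanish in nonzero degrees and `T`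
classically generates. -/
def IsTilting (T : C) : Prop :=
  (∀ i : ℤ, i ≠ 0 → ∀ f : T ⟶ T⟦i⟧, f = 0) ∧ ClassicallyGenerates T

end Thick

/-!
`Ind` is left adjoint to the faithful forgetful functor `D^G ⥤ D`, which is triangulated; hence
`Ind` is triangulated, and each counit `Ind X ⟶ X` is an epimorphism, therefore split in the
triangulated category `D^G`. So the preimage under `Ind` of a thick subcategory containing `Ind T`
is thick and contains `T`, hence is everything, and every object of `D^G` is a summand of an
induced one. For the vanishing, the underlying object of `Ind T` is `⊕_g F_g T` with
`F_g T ≅ T`, so every morphism `Ind T ⟶ (Ind T)[i]` has components in `Hom(T, T[i]) = 0`.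
-/

instance EqObj.faithful_forget (act : GAction G A) : (EqObj.forget act).Faithful where
  map_injective h := EqObj.hom_ext h

lemma CategoryTheory.Adjunction.isSplitEpi_counit_app {C E : Type*} [Category C] [Category E]
    [SplitEpiCategory E] {L : C ⥤ E} {R : E ⥤ C} (adj : L ⊣ R) [R.Faithful] (Y : E) :
    IsSplitEpi (adj.counit.app Y) := by
  have : IsSplitEpi (R.map (adj.counit.app Y)) :=
    ⟨⟨⟨adj.unit.app (R.obj Y), adj.right_triangle_components Y⟩⟩⟩
  have : Epi (adj.counit.app Y) := R.epi_of_epi_map inferInstance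
  exact isSplitEpi_of_epi _

section Shift

variable {C : Type*} [Category C] [HasShift C ℤ]

lemma shift_hom_eq_zero_of_iso [HasZeroMorphisms C] {X X' Y Y' : C} (e : X' ≅ X)
    (e' : Y' ≅ Y) {i : ℤ} (h : ∀ u : X ⟶ Y⟦i⟧, u = 0) (u : X' ⟶ Y'⟦i⟧) :
    u = 0 := by
  have := h (e.inv ≫ u ≫ e'.hom⟦i⟧')
  simpa [← Functor.map_comp] using e.hom ≫= this =≫ e'.inv⟦i⟧'

lemma biproduct_shift_hom_eq_zero [Preadditive C] [∀ n : ℤ, (shiftFunctor C n).Additive]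
    {J K : Type*} [Finite J] [Finite K] {X : J → C} {Y : K → C} [HasBiproduct X]
    [HasBiproduct Y] {i : ℤ} (h : ∀ j k (u : X j ⟶ (Y k)⟦i⟧), u = 0)
    (u : ⨁ X ⟶ (⨁ Y)⟦i⟧) : u = 0 := by
  -- Additive functors are only known to preserve biproducts indexed by `Type`, and `J` is
  -- arbitrary: use instead that `[i]` is a right adjoint.
  let adj : shiftFunctor C (-i) ⊣ shiftFunctor C i := (shiftEquiv C i).symm.toAdjunction
  refine biproduct.hom_ext' _ _ fun j => (adj.homEquiv _ _).symm.injective ?_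
  refine biproduct.hom_ext _ _ fun k => ?_
  rw [← adj.homEquiv_naturality_right_symm, Category.assoc,
    h j k (biproduct.ι X j ≫ u ≫ (biproduct.π Y k)⟦i⟧')]
  simp [Adjunction.homEquiv_counit]

end Shift

section

variable {C E : Type*} [Category C] [Category E] [Preadditive C] [Preadditive E]
  [HasZeroObject C] [HasZeroObject E] [HasShift C ℤ] [HasShift E ℤ]
  [∀ n : ℤ, (shiftFunctor C n).Additive] [∀ n : ℤ, (shiftFunctor E n).Additive]
  [Pretriangulated C] [Pretriangulated E]

lemma IsThickSet.preimage {S : Set E} (hS : IsThickSet S) (F : C ⥤ E) [F.CommShift ℤ]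
    [F.IsTriangulated] : IsThickSet {X | F.obj X ∈ S} := by
  obtain ⟨hiso, hshift, hretract, hext⟩ := hS
  refine ⟨fun X hX Y ⟨e⟩ => hiso _ hX _ ⟨F.mapIso e⟩,
    fun X hX n => hiso _ (hshift _ hX n) _ ⟨((F.commShiftIso n).app X).symm⟩,
    fun X hX Y s r hsr => hretract _ hX _ (F.map s) (F.map r) (by simp [← F.map_comp, hsr]),
    fun T hT h₁ h₂ => hext _ (F.map_distinguished T hT) h₁ h₂⟩

lemma ClassicallyGenerates.of_leftAdjoint {F : C ⥤ E} {R : E ⥤ C} (adj : F ⊣ R) [R.Faithful]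
    [F.CommShift ℤ] [F.IsTriangulated] {T : C} (hT : ClassicallyGenerates T) :
    ClassicallyGenerates (F.obj T) := by
  intro S hS hTS X
  have hFS : ∀ Y : C, F.obj Y ∈ S := hT _ (hS.preimage F) hTS
  have := adj.isSplitEpi_counit_app X
  exact hS.2.2.1 _ (hFS (R.obj X)) X (section_ (adj.counit.app X)) (adj.counit.app X)
    (IsSplitEpi.id _)

end

open Pretriangulated in
/-- Let `D` be an idempotent-complete triangulated category with an admissible
`G`-action, `|G|` invertible in `D`, and `D^G` carrying the canonical triangulated
structure.  If `T` is a `G`-invariant tilting object of `D`, then `Ind(T)` is a tilting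
object of `D^G`. -/
theorem induction_of_tilting
    {D : Type u} [Category.{v} D] [Preadditive D] [HasZeroObject D]
    [HasShift D ℤ] [∀ n : ℤ, (shiftFunctor D n).Additive] [Pretriangulated D]
    [HasFiniteBiproducts D] [IsIdempotentComplete D]
    [Fintype G] (act : GAction G D) [∀ g : G, (act.F g).Additive]
    [∀ g : G, (act.F g).CommShift ℤ]
    (hadm : AdmissibleOn act)
    (hG : NatInvertibleIn (Fintype.card G) D)
    [HasShift (EqObj act) ℤ] [∀ n : ℤ, (shiftFunctor (EqObj act) n).Additive]
    [(EqObj.forget act).CommShift ℤ] [Pretriangulated (EqObj act)]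
    (hdist : ∀ T : Triangle (EqObj act),
      (T ∈ distTriang (EqObj act)) ↔
        ((EqObj.forget act).mapTriangle.obj T ∈ distTriang D))
    (Ind : D ⥤ EqObj act) (hInd : IsInduction act Ind)
    (adj₁ : Ind ⊣ EqObj.forget act) (adj₂ : EqObj.forget act ⊣ Ind)
    (hcomp : ∀ X : D, adj₁.unit.app X ≫ adj₂.counit.app X = 𝟙 X)
    (T : D) (hGinv : ∀ g : G, Nonempty ((act.F g).obj T ≅ T))
    (hT : IsTilting T) :
    IsTilting (Ind.obj T) := by
  let := adj₁.leftAdjointCommShift ℤ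
  have := adj₁.commShift_of_rightAdjoint ℤ
  have : (EqObj.forget act).IsTriangulated := ⟨fun T hT => (hdist T).1 hT⟩
  have := adj₁.isTriangulated_leftAdjoint
  refine ⟨fun i hi f => ?_, hT.2.of_leftAdjoint adj₁⟩
  obtain ⟨e, -⟩ := hInd
  have hcomponents (g h : G) : ∀ u : (act.F g).obj T ⟶ ((act.F h).obj T)⟦i⟧, u = 0 :=
    shift_hom_eq_zero_of_iso (hGinv g).some (hGinv h).some (hT.1 i hi)
  have hforget : (EqObj.forget act).map f ≫
      ((EqObj.forget act).commShiftIso i).hom.app (Ind.obj T) = 0 :=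
    shift_hom_eq_zero_of_iso (e T) (e T) (biproduct_shift_hom_eq_zero hcomponents) _
  refine (EqObj.forget act).map_injective ?_
  rw [Functor.map_zero, ← cancel_mono (((EqObj.forget act).commShiftIso i).hom.app _), hforget,
    zero_comp]
end
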